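/- arXiv:2605.28570 — 3 statements merged into one kernel-verified Lean document; each statement's English description precedes it below -/
import Mathlib

section
/- Let x be a binary word and a a letter. If the word a·x contains an overlap as a factor, then so does ā·μ(x), where ā denotes the complement of a and μ is the Thue-Morse morphism. -/
/-- Thue–Morse morphism: μ(0)=01, μ(1)=10, encoding 0 = false, 1 = true. -/
def mu (w : List Bool) : List Bool := w.flatMap fun b => [b, !b]

/-- A word is an overlap if it has the form a·x·a·x·a for a letter a. -/
def IsOverlap (w : List Bool) : Prop :=
  ∃ (a : Bool) (x : List Bool), w = [a] ++ x ++ [a] ++ x ++ [a]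

/-- A word contains an overlap as a factor. -/
def HasOverlap (w : List Bool) : Prop := ∃ f, f <:+: w ∧ IsOverlap f

/-- A word is overlap-free if no factor is an overlap. -/
def OverlapFree (w : List Bool) : Prop := ∀ f, f <:+: w → ¬ IsOverlap f

/-!
An overlap of `a·x` either lies inside `x`, and then `μ` maps it to a word containing an
overlap (`μ(b y b y b)` contains `b (b̄ μ y) b (b̄ μ y) b`), or it is a prefix `a y a y a`;
then `ā μ(x)` begins with `ā (μ y a) ā (μ y a) ā`, because `μ(a) = a ā`.
-/

@[simp]
lemma mu_nil : mu [] = [] := rfl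

@[simp]
lemma mu_append (u v : List Bool) : mu (u ++ v) = mu u ++ mu v :=
  List.flatMap_append

@[simp]
lemma mu_cons (b : Bool) (w : List Bool) : mu (b :: w) = b :: (!b) :: mu w := rfl

lemma List.IsInfix.mu {u v : List Bool} (h : u <:+: v) : _root_.mu u <:+: _root_.mu v := by
  obtain ⟨s, t, rfl⟩ := h
  exact ⟨_root_.mu s, _root_.mu t, by simp⟩

lemma HasOverlap.mono {u v : List Bool} (h : HasOverlap u) (huv : u <:+: v) : HasOverlap v :=
  let ⟨f, hfu, hf⟩ := h
  ⟨f, hfu.trans huv, hf⟩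

lemma IsOverlap.hasOverlap_mu {f : List Bool} (h : IsOverlap f) : HasOverlap (mu f) := by
  obtain ⟨b, y, rfl⟩ := h
  refine ⟨[b] ++ ([!b] ++ mu y) ++ [b] ++ ([!b] ++ mu y) ++ [b], ⟨[], [!b], ?_⟩,
    b, [!b] ++ mu y, rfl⟩
  simp

lemma HasOverlap.mu {w : List Bool} (h : HasOverlap w) : HasOverlap (mu w) :=
  let ⟨_, hfw, hf⟩ := h
  hf.hasOverlap_mu.mono hfw.mu

lemma HasOverlap.of_cons {a : Bool} {x : List Bool} (h : HasOverlap (a :: x)) :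
    (∃ y t, x = y ++ [a] ++ y ++ [a] ++ t) ∨ HasOverlap x := by
  obtain ⟨f, hf, b, y, rfl⟩ := h
  rcases List.infix_cons_iff.mp hf with ⟨t, hpre⟩ | hinf
  · simp only [List.append_assoc, List.cons_append, List.cons.injEq] at hpre
    obtain ⟨rfl, rfl⟩ := hpre
    exact .inl ⟨y, t, by simp⟩
  · exact .inr ⟨_, hinf, b, y, rfl⟩

lemma hasOverlap_not_cons_mu_of_eq {a : Bool} {x y t : List Bool}
    (hx : x = y ++ [a] ++ y ++ [a] ++ t) : HasOverlap ((!a) :: mu x) := by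
  refine ⟨[!a] ++ (mu y ++ [a]) ++ [!a] ++ (mu y ++ [a]) ++ [!a], ⟨[], mu t, ?_⟩,
    !a, mu y ++ [a], rfl⟩
  simp [hx]

theorem stmt_1 (x : List Bool) (a : Bool) (h : HasOverlap (a :: x)) :
    HasOverlap ((!a) :: mu x) := by
  rcases h.of_cons with ⟨y, t, hx⟩ | hx
  · exact hasOverlap_not_cons_mu_of_eq hx
  · exact hx.mu.mono (List.suffix_cons _ _).isInfix
end

section
/- Suppose x is a nonempty binary word, y is an overlap-free binary word, and a, b are letters such that a·x·x·b = μ(y). Then x ∈ {0, 1, 010, 101}. -/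
@[simp]
lemma mu_cons_s6 (c : Bool) (t : List Bool) : mu (c :: t) = c :: (!c) :: mu t := rfl

@[simp]
lemma length_mu (y : List Bool) : (mu y).length = 2 * y.length := by
  induction y with
  | nil => rfl
  | cons c t ih => simp [ih]; ring

lemma getElem?_mu_two_mul (y : List Bool) (i : ℕ) : (mu y)[2 * i]? = y[i]? := by
  induction y generalizing i with
  | nil => simp
  | cons c t ih => cases i with
    | zero => simp
    | succ i => simpa [Nat.mul_succ] using ih i

lemma getElem?_mu_two_mul_add_one (y : List Bool) (i : ℕ) :
    (mu y)[2 * i + 1]? = y[i]?.map (!·) := by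
  induction y generalizing i with
  | nil => simp
  | cons c t ih => cases i with
    | zero => simp
    | succ i => simpa [Nat.mul_succ] using ih i

lemma getElem?_succ_add_length_of_eq_square {α : Type*} {w x : List α} {a b : α}
    (h : w = [a] ++ x ++ x ++ [b]) {i : ℕ} (hi : i < x.length) :
    w[i + 1 + x.length]? = w[i + 1]? := by
  subst h
  rw [show i + 1 + x.length = x.length + i + 1 by omega]
  simp [List.getElem?_append_right, List.getElem?_append_left hi]

lemma isOverlap_of_period {w : List Bool} {p : ℕ} (hp : 0 < p) (hw : w.length = 2 * p + 1)
    (hper : ∀ k ≤ p, w[k + p]? = w[k]?) : IsOverlap w := by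
  obtain ⟨c, u, hcu⟩ := List.exists_cons_of_ne_nil (l := w.take p)
    (List.ne_nil_of_length_pos (by simp; omega))
  have hdrop : w.drop p = w.take (p + 1) := List.ext_getElem? fun i => by
    rcases le_or_gt i p with hi | hi
    · rw [List.getElem?_drop, List.getElem?_take_of_lt (by omega), add_comm, hper i hi]
    · rw [List.getElem?_drop, List.getElem?_take_eq_none (by omega),
        List.getElem?_eq_none (by omega)]
  have hwp : w[p]? = some c := by
    rw [← zero_add p, hper 0 p.zero_le, ← List.getElem?_take_of_lt hp, hcu]; rfl
  refine ⟨c, u, ?_⟩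
  rw [← List.take_append_drop p w, hdrop, List.take_add_one, hwp, hcu]
  simp

lemma not_overlapFree_of_period {y : List Bool} {i p : ℕ} (hp : 0 < p)
    (hlen : i + 2 * p + 1 ≤ y.length) (hper : ∀ k ≤ p, y[i + k + p]? = y[i + k]?) :
    ¬ OverlapFree y := by
  intro hy
  refine hy ((y.drop i).take (2 * p + 1))
    ((List.take_prefix _ _).isInfix.trans (List.drop_suffix i y).isInfix)
    (isOverlap_of_period hp (by simp; omega) fun k hk => ?_)
  simp only [List.getElem?_take_of_lt (show k + p < 2 * p + 1 by omega),
    List.getElem?_take_of_lt (show k < 2 * p + 1 by omega), List.getElem?_drop]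
  rw [← add_assoc]
  exact hper k hk

section SquareInMu

variable {x y : List Bool} {a b : Bool}

lemma length_eq_succ_of_eq_mu (h : [a] ++ x ++ x ++ [b] = mu y) :
    y.length = x.length + 1 := by
  have := congrArg List.length h
  simp at this
  omega

lemma not_overlapFree_of_length_eq_two_mul (h : [a] ++ x ++ x ++ [b] = mu y) {p : ℕ}
    (hp : 0 < p) (hx : x.length = 2 * p) : ¬ OverlapFree y := by
  have hy := length_eq_succ_of_eq_mu h
  refine not_overlapFree_of_period (i := 0) hp (by omega) fun k hk => ?_
  rcases hk.lt_or_eq with hk | rfl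
  · have := getElem?_succ_add_length_of_eq_square h.symm (i := 2 * k) (by omega)
    rw [hx, show 2 * k + 1 + 2 * p = 2 * (k + p) + 1 by ring, getElem?_mu_two_mul_add_one,
      getElem?_mu_two_mul_add_one] at this
    simpa using Option.map_injective Bool.not_injective this
  · have := getElem?_succ_add_length_of_eq_square h.symm (i := 2 * k - 1) (by omega)
    rw [hx, show 2 * k - 1 + 1 + 2 * k = 2 * (2 * k) by omega,
      show 2 * k - 1 + 1 = 2 * k by omega, getElem?_mu_two_mul, getElem?_mu_two_mul] at this
    simpa [two_mul] using this

section OddLength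

variable (h : [a] ++ x ++ x ++ [b] = mu y) {q : ℕ} (hx : x.length = 2 * q + 1)
include h hx

lemma getElem?_add_succ_eq_not_of_eq_mu {k : ℕ} (hk : k ≤ q) :
    y[q + k + 1]? = y[k]?.map (!·) := by
  have := getElem?_succ_add_length_of_eq_square h.symm (i := 2 * k) (by omega)
  rwa [hx, show 2 * k + 1 + (2 * q + 1) = 2 * (q + k + 1) by ring, getElem?_mu_two_mul,
    getElem?_mu_two_mul_add_one] at this

lemma getElem?_add_eq_not_of_eq_mu {k : ℕ} (hk1 : 1 ≤ k) (hk : k ≤ q) :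
    y[q + k]? = y[k]?.map (!·) := by
  have := getElem?_succ_add_length_of_eq_square h.symm (i := 2 * k - 1) (by omega)
  rw [hx, show 2 * k - 1 + 1 + (2 * q + 1) = 2 * (q + k) + 1 by omega,
    show 2 * k - 1 + 1 = 2 * k by omega, getElem?_mu_two_mul,
    getElem?_mu_two_mul_add_one] at this
  simpa [Function.comp_def] using congrArg (Option.map (!·)) this

lemma not_overlapFree_of_length_eq_two_mul_add_one (hq : 2 ≤ q) : ¬ OverlapFree y :=
  not_overlapFree_of_period (i := q + 1) (p := 1) one_pos
    (by have := length_eq_succ_of_eq_mu h; omega) fun k hk => by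
      rw [show q + 1 + k + 1 = q + (k + 1) + 1 by ring, show q + 1 + k = q + (k + 1) by ring,
        getElem?_add_succ_eq_not_of_eq_mu h hx (by omega),
        getElem?_add_eq_not_of_eq_mu h hx (by omega) (by omega)]

end OddLength

lemma exists_eq_of_eq_mu_of_length_eq_three (h : [a] ++ x ++ x ++ [b] = mu y)
    (hx : x.length = 3) : ∃ c, x = [!c, c, !c] := by
  obtain ⟨c₀, c₁, c₂, rfl⟩ := List.length_eq_three.mp hx
  obtain ⟨d₀, d₁, d₂, d₃, rfl⟩ := List.length_eq_four.mp (length_eq_succ_of_eq_mu h)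
  simp only [List.cons_append, List.nil_append, mu_cons_s6, mu_nil, List.cons.injEq] at h
  obtain ⟨-, rfl, rfl, rfl, hd₂, rfl, -⟩ := h
  exact ⟨!d₂, by rw [hd₂, Bool.not_not]⟩

end SquareInMu

theorem stmt_6 (x y : List Bool) (a b : Bool) (hx : x ≠ [])
    (hy : OverlapFree y) (h : [a] ++ x ++ x ++ [b] = mu y) :
    x ∈ [[false], [true], [false, true, false], [true, false, true]] := by
  obtain ⟨q, hq | hq⟩ := Nat.even_or_odd' x.length
  · have hq0 : 0 < q := by
      have := List.length_pos_iff.mpr hx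
      omega
    exact absurd hy (not_overlapFree_of_length_eq_two_mul h hq0 hq)
  · rcases (by omega : q = 0 ∨ q = 1 ∨ 2 ≤ q) with rfl | rfl | hq2
    · obtain ⟨c, rfl⟩ := List.length_eq_one_iff.mp hq
      cases c <;> simp
    · obtain ⟨c, rfl⟩ := exists_eq_of_eq_mu_of_length_eq_three h hq
      cases c <;> simp
    · exact absurd hy (not_overlapFree_of_length_eq_two_mul_add_one h hq hq2)
end

section
/- The binary word (001)²(10)²(01)²(10)²(011001)²(10)²(01)²(10)²(011)² is overlap-free; hence there exists an overlap-free binary word that is a concatenation of nine nonempty squares. -/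
def sqw (x : List Bool) : List Bool := x ++ x

def W16 : List Bool :=
  sqw [false,false,true] ++ sqw [true,false] ++ sqw [false,true] ++ sqw [true,false] ++
  sqw [false,true,true,false,false,true] ++ sqw [true,false] ++ sqw [false,true] ++
  sqw [true,false] ++ sqw [false,true,true]

/-! Overlap-freeness of a given word is decidable, since every factor is a prefix of a suffix and
an overlap `a x a x a` is determined by its length `2 |x| + 3`; the word `W16` is then checked by
evaluation in the kernel. -/

def overlapBody (f : List Bool) : List Bool := f.tail.take (f.length / 2 - 1)

theorem isOverlap_iff (f : List Bool) :
    IsOverlap f ↔ ∃ a, f = [a] ++ overlapBody f ++ [a] ++ overlapBody f ++ [a] := by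
  refine ⟨?_, fun ⟨a, h⟩ => ⟨a, _, h⟩⟩
  rintro ⟨a, x, rfl⟩
  refine ⟨a, ?_⟩
  have hlen : ([a] ++ x ++ [a] ++ x ++ [a]).length / 2 - 1 = x.length := by
    simp only [List.length_append, List.length_singleton]; omega
  rw [overlapBody, hlen]
  simp

instance : DecidablePred IsOverlap := fun f => decidable_of_iff _ (isOverlap_iff f).symm

theorem overlapFree_iff_forall_mem_tails_inits (w : List Bool) :
    OverlapFree w ↔ ∀ t ∈ w.tails, ∀ f ∈ t.inits, ¬ IsOverlap f := by
  simp only [OverlapFree, List.infix_iff_prefix_suffix, List.mem_tails, List.mem_inits]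
  exact ⟨fun h t ht f hf => h f ⟨t, hf, ht⟩, fun h f ⟨t, hf, ht⟩ => h t ht f hf⟩

instance : DecidablePred OverlapFree := fun w =>
  decidable_of_iff _ (overlapFree_iff_forall_mem_tails_inits w).symm

theorem stmt_16 :
    OverlapFree W16 ∧
    ∃ l : List (List Bool), l.length = 9 ∧
      (∀ s ∈ l, ∃ x : List Bool, x ≠ [] ∧ s = x ++ x) ∧ l.flatten = W16 := by
  let roots : List (List Bool) :=
    [[false, false, true], [true, false], [false, true], [true, false],
      [false, true, true, false, false, true], [true, false], [false, true], [true, false],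
      [false, true, true]]
  have roots_ne_nil : ∀ x ∈ roots, x ≠ [] := by decide
  refine ⟨by decide, roots.map sqw, rfl, ?_, rfl⟩
  exact List.forall_mem_map.2 fun x hx => ⟨x, roots_ne_nil x hx, rfl⟩
end
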